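/- arXiv:math/0410473 — 5 statements merged into one kernel-verified Lean document; each statement's English description precedes it below -/
import Mathlib

section
/- The linear map f on sl(2,1) defined on the basis by f(E11+E33)=0, f(E22+E33)=E22+E33, f(E21)=0, f(E12)=E12, f(E23)=0, f(E13)=E13, f(E31)=-E13, f(E32)=E23+E32 satisfies the functional equation (f-1)[f(x),f(y)] = f([(f-1)(x),(f-1)(y)]) for all x, y in sl(2,1). -/
/- ## The Lie superalgebra sl(2,1) as 3x3 supermatrices (grading 2|1) over ℚ -/

abbrev M3 := Matrix (Fin 3) (Fin 3) ℚ

/-- sign (-1)^b -/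
def sgn (b : Bool) : ℚ := if b then -1 else 1

/-- parity of the index i (grading 2|1): rows/columns 0,1 even, 2 odd -/
def σ3 (i : Fin 3) : Bool := decide (i = (2 : Fin 3))

/-- parity of the matrix unit E i j -/
def pi3 (i j : Fin 3) : Bool := σ3 i != σ3 j

/-- even part of a supermatrix -/
def evM (m : M3) : M3 := Matrix.of (fun i j => if σ3 i = σ3 j then m i j else 0)

/-- odd part of a supermatrix -/
def odM (m : M3) : M3 := Matrix.of (fun i j => if σ3 i = σ3 j then 0 else m i j)

/-- the super commutator, i.e. the bilinear extension of
    [x,y] = xy - (-1)^{|x||y|} yx on homogeneous elements -/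
def sbr (x y : M3) : M3 := x * y - (evM y * x + odM y * evM x - odM y * odM x)

/-- matrix units -/
def Eu (i j : Fin 3) : M3 := Matrix.single i j 1

/-- E11 + E33 (0-indexed: E00 + E22) -/
def A3 : M3 := Eu 0 0 + Eu 2 2

/-- E22 + E33 (0-indexed: E11 + E22) -/
def B3 : M3 := Eu 1 1 + Eu 2 2

/-- the supertrace -/
def str (m : M3) : ℚ := m 0 0 + m 1 1 - m 2 2

/-- sl(2,1): supermatrices with supertrace zero -/
def sl21 : Submodule ℚ M3 where
  carrier := {m | str m = 0}
  add_mem' := by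
    intro a b ha hb
    simp only [Set.mem_setOf_eq, str, Matrix.add_apply] at *
    linarith
  zero_mem' := by simp [str]
  smul_mem' := by
    intro c m hm
    simp only [Set.mem_setOf_eq, str, Matrix.smul_apply, smul_eq_mul] at *
    linear_combination c * hm

/-- m is homogeneous of parity p -/
def homogM (m : M3) (p : Bool) : Prop := m = (if p then odM m else evM m)

/- ## Tensors: g ⊗ g realized as 4-index arrays -/

abbrev T3 := Fin 3 → Fin 3 → Fin 3 → Fin 3 → ℚ

/-- a ⊗ b -/
def tm (a b : M3) : T3 := fun i j k l => a i j * b k l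

/-- the super permutation map T_s(a ⊗ b) = (-1)^{|a||b|} b ⊗ a -/
def TsM (t : T3) : T3 := fun i j k l => sgn (pi3 i j && pi3 k l) * t k l i j

/-- a ∧ b = a ⊗ b - (-1)^{|a||b|} b ⊗ a -/
def wdg (a b : M3) : T3 := tm a b - TsM (tm a b)

/-- the Casimir 2-tensor Ω of sl(2,1) -/
def Omega : T3 :=
  tm A3 (-B3) + tm (-B3) A3 + tm (Eu 0 1) (Eu 1 0) + tm (Eu 1 0) (Eu 0 1)
  - tm (Eu 0 2) (Eu 2 0) + tm (Eu 2 0) (Eu 0 2) - tm (Eu 1 2) (Eu 2 1) + tm (Eu 2 1) (Eu 1 2)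

/-- the r-matrix r(f) -/
def rf : T3 :=
  tm (-B3) A3 + tm (Eu 0 1) (Eu 1 0) - tm (Eu 0 2) (Eu 2 0)
  + tm (Eu 2 1) (Eu 1 2) - tm (Eu 0 2) (Eu 0 2) + tm (Eu 1 2) (Eu 1 2)

/-- the standard r-matrix r_s -/
def rs : T3 :=
  tm (-B3) A3 + tm (Eu 0 1) (Eu 1 0) - tm (Eu 0 2) (Eu 2 0) + tm (Eu 2 1) (Eu 1 2)

/-- the super adjoint action of g on g ⊗ g:
    g · (a ⊗ b) = [g,a] ⊗ b + (-1)^{|g||a|} a ⊗ [g,b]  (= [g⊗1 + 1⊗g, t]) -/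
def act (g : M3) (t : T3) : T3 := fun i j k l =>
  sbr g (Matrix.of (fun a b => t a b k l)) i j
  + sbr (evM g) (Matrix.of (fun a b => t i j a b)) k l
  + sgn (pi3 i j) * sbr (odM g) (Matrix.of (fun a b => t i j a b)) k l

/-- the cocommutator δ_f(g) = [g⊗1 + 1⊗g, r(f)] -/
def δf (g : M3) : T3 := act g rf

/-- the standard cocommutator δ_s(g) = [g⊗1 + 1⊗g, r_s] -/
def δs (g : M3) : T3 := act g rs

/-- the linear map f defining r(f) -/
def fmap (m : M3) : M3 :=
  m 1 1 • B3 + m 0 1 • Eu 0 1 + (m 0 2 - m 2 0) • Eu 0 2 + m 2 1 • (Eu 1 2 + Eu 2 1)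

/- ## Distinguished subalgebras -/

def S1 : Submodule ℚ M3 := Submodule.span ℚ {A3, Eu 1 0, Eu 1 2, Eu 0 2 + Eu 2 0}
def S2 : Submodule ℚ M3 := Submodule.span ℚ {B3, Eu 0 1, Eu 0 2, Eu 1 2 + Eu 2 1}
def T1 : Submodule ℚ M3 := Submodule.span ℚ {A3, Eu 1 0, Eu 1 2, Eu 2 0}
def T2 : Submodule ℚ M3 := Submodule.span ℚ {B3, Eu 0 1, Eu 0 2, Eu 2 1}

/-- S1 ⊗ S1 inside T3 -/
def TS1 : Submodule ℚ T3 := Submodule.span ℚ {t : T3 | ∃ a ∈ S1, ∃ b ∈ S1, t = tm a b}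
/-- S2 ⊗ S2 inside T3 -/
def TS2 : Submodule ℚ T3 := Submodule.span ℚ {t : T3 | ∃ a ∈ S2, ∃ b ∈ S2, t = tm a b}

/- ## The abstract 4-dimensional Lie superalgebras s and t
     basis: e0 = h, e1 = x (even), e2 = y1, e3 = y2 (odd) -/

abbrev V4 := Fin 4 → ℚ

/-- parity of the basis vectors of s (h, x even; y1, y2 odd) -/
def pV (i : Fin 4) : Bool := decide (2 ≤ i.val)

/-- basis vectors -/
def eV (i : Fin 4) : V4 := fun j => if j = i then 1 else 0

/-- structure constants of s: [h,x] = -x, [h,y1] = -y1, [x,y2] = y1,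
    [y1,y2] = x, [y2,y2] = 2h (and super-antisymmetric partners) -/
def cS : Fin 4 → Fin 4 → V4 :=
  ![![0, -eV 1, -eV 2, 0],
    ![eV 1, 0, 0, eV 2],
    ![eV 2, 0, 0, eV 1],
    ![0, -eV 2, eV 1, (2 : ℚ) • eV 0]]

/-- the bracket of s -/
def brS (u v : V4) : V4 := fun k => ∑ i : Fin 4, ∑ j : Fin 4, u i * v j * cS i j k

/-- structure constants of t: [h,x] = -x, [h,y1] = -y1, [y1,y2] = x -/
def cT : Fin 4 → Fin 4 → V4 :=
  ![![0, -eV 1, -eV 2, 0],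
    ![eV 1, 0, 0, 0],
    ![eV 2, 0, 0, eV 1],
    ![0, 0, eV 1, 0]]

/-- the bracket of t -/
def brT (u v : V4) : V4 := fun k => ∑ i : Fin 4, ∑ j : Fin 4, u i * v j * cT i j k

/-- even part in s -/
def evV (u : V4) : V4 := fun i => if pV i then 0 else u i
/-- odd part in s -/
def odV (u : V4) : V4 := fun i => if pV i then u i else 0
/-- u is homogeneous of parity p -/
def homogV (u : V4) (p : Bool) : Prop := u = (if p then odV u else evV u)

/-- derived series of s -/
def derS : ℕ → Submodule ℚ V4
  | 0 => ⊤
  | n + 1 => Submodule.span ℚ {w : V4 | ∃ u ∈ derS n, ∃ v ∈ derS n, w = brS u v}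

/- ## Tensors over s -/

abbrev TV := Fin 4 → Fin 4 → ℚ
abbrev T3V := Fin 4 → Fin 4 → Fin 4 → ℚ

def tmV (u v : V4) : TV := fun i j => u i * v j
def TsV (t : TV) : TV := fun i j => sgn (pV i && pV j) * t j i
/-- a ∧ b in s ⊗ s -/
def wdgV (u v : V4) : TV := tmV u v - TsV (tmV u v)

/-- the cocommutator δ_1 on s: δ_1(h) = -y1∧y1, δ_1(x) = x∧h - y1∧y2,
    δ_1(y1) = 0, δ_1(y2) = y2∧h + x∧y1 -/
def δ1 (u : V4) : TV :=
  u 0 • (-(wdgV (eV 2) (eV 2)))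
  + u 1 • (wdgV (eV 1) (eV 0) - wdgV (eV 2) (eV 3))
  + u 3 • (wdgV (eV 3) (eV 0) + wdgV (eV 1) (eV 2))

/-- the cocommutator δ_2 on s: δ_2(h) = y1∧y1, δ_2(x) = -(x∧h - y1∧y2),
    δ_2(y1) = 0, δ_2(y2) = -(y2∧h + x∧y1) -/
def δ2 (u : V4) : TV :=
  u 0 • (wdgV (eV 2) (eV 2))
  + u 1 • (-(wdgV (eV 1) (eV 0) - wdgV (eV 2) (eV 3)))
  + u 3 • (-(wdgV (eV 3) (eV 0) + wdgV (eV 1) (eV 2)))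

/-- super pairing ⟨α⊗β, u⊗v⟩ = (-1)^{|β||u|} α(u) β(v), with α, β written in the
    dual basis coordinates -/
def pairV (al be : V4) (t : TV) : ℚ :=
  ∑ i : Fin 4, ∑ j : Fin 4, sgn (pV i && pV j) * al i * be j * t i j

/-- the bracket on s* induced by δ_1: ⟨[α,β], s⟩ = ⟨α⊗β, δ_1(s)⟩ -/
def dbr (al be : V4) : V4 := fun k => pairV al be (δ1 (eV k))

/-- the linear map s* → s given by h* ↦ h, x* ↦ x, y1* ↦ y2, y2* ↦ y1 -/
def θS (al : V4) : V4 := fun k => al (![0, 1, 3, 2] k)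

/-- (δ_1 ⊗ Id) on tensors -/
def d1Id (t : TV) : T3V := fun i j k => ∑ a : Fin 4, δ1 (eV a) i j * t a k

/-- the super cyclic symmetrizer Alt_s on 3-tensors -/
def AltS (t : T3V) : T3V := fun i j k =>
  t i j k + sgn (pV k && (pV i != pV j)) * t k i j + sgn (pV i && (pV j != pV k)) * t j k i

/-- super adjoint action of g ∈ s on s ⊗ s -/
def actV (g : V4) (t : TV) : TV := fun i j =>
  (∑ a : Fin 4, brS g (eV a) i * t a j)
  + (∑ b : Fin 4, t i b * (brS (evV g) (eV b) j + sgn (pV i) * brS (odV g) (eV b) j))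

/- ## identification maps -/

/-- the map s → sl(2,1) inverse to S1 → s, A ↦ -h, E21 ↦ x, E13+E31 ↦ -y2, E23 ↦ y1 -/
def ψ9 (u : V4) : M3 := u 0 • (-A3) + u 1 • Eu 1 0 + u 2 • Eu 1 2 + u 3 • (-(Eu 0 2 + Eu 2 0))

/-- the map s → sl(2,1), h ↦ E22+E33, x ↦ E12, y1 ↦ E13, y2 ↦ E23+E32 -/
def ψ10 (u : V4) : M3 := u 0 • B3 + u 1 • Eu 0 1 + u 2 • Eu 0 2 + u 3 • (Eu 1 2 + Eu 2 1)

/-- the map t → sl(2,1), h ↦ E22+E33, x ↦ E12, y1 ↦ E13, y2 ↦ E32 -/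
def ψ18 (u : V4) : M3 := u 0 • B3 + u 1 • Eu 0 1 + u 2 • Eu 0 2 + u 3 • Eu 2 1

/-!
The map `f` is the projection of sl(2,1) onto `S2 = span {E22+E33, E12, E13, E23+E32}` along
`S1 = span {E11+E33, E21, E23, E13+E31}`, and both are subalgebras. Hence `[f x, f y] ∈ S2` is
fixed by `f`, so the left side vanishes; for `x, y` of supertrace zero, `(f - 1) x, (f - 1) y ∈ S1`
give a bracket in the kernel `S1` of `f`, so the right side vanishes too.
-/

theorem Submodule.mem_span_quadruple {R M : Type*} [Semiring R] [AddCommMonoid M] [Module R M]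
    {v x y z w : M} :
    v ∈ Submodule.span R ({x, y, z, w} : Set M) ↔
      ∃ a b c d : R, a • x + b • y + c • z + d • w = v := by
  rw [Submodule.mem_span_insert]
  simp_rw [Submodule.mem_span_triple]
  refine exists_congr fun a ↦ ⟨?_, ?_⟩
  · rintro ⟨u, ⟨b, c, d, rfl⟩, rfl⟩
    exact ⟨b, c, d, by simp only [add_assoc]⟩
  · rintro ⟨b, c, d, rfl⟩
    exact ⟨b • y + c • z + d • w, ⟨b, c, d, rfl⟩, by simp only [add_assoc]⟩

lemma mem_S1_iff {m : M3} : m ∈ S1 ↔ ∃ a b c d : ℚ, m = !![a, 0, d; b, 0, c; d, 0, a] := by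
  rw [S1, Submodule.mem_span_quadruple]
  refine exists₄_congr fun a b c d ↦ ⟨fun h ↦ h ▸ ?_, fun h ↦ h ▸ ?_⟩ <;>
  · ext i j
    fin_cases i <;> fin_cases j <;> simp [A3, Eu]

lemma mem_S2_iff {m : M3} : m ∈ S2 ↔ ∃ a b c d : ℚ, m = !![0, b, c; 0, a, d; 0, d, a] := by
  rw [S2, Submodule.mem_span_quadruple]
  refine exists₄_congr fun a b c d ↦ ⟨fun h ↦ h ▸ ?_, fun h ↦ h ▸ ?_⟩ <;>
  · ext i j
    fin_cases i <;> fin_cases j <;> simp [B3, Eu]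

lemma sbr_mem_S1 {m n : M3} (hm : m ∈ S1) (hn : n ∈ S1) : sbr m n ∈ S1 := by
  obtain ⟨a, b, c, d, rfl⟩ := mem_S1_iff.1 hm
  obtain ⟨a', b', c', d', rfl⟩ := mem_S1_iff.1 hn
  refine mem_S1_iff.2 ⟨2 * d * d', a' * b - a * b' + c * d' + c' * d,
    a' * c - a * c' + b * d' - b' * d, 0, ?_⟩
  ext i j
  fin_cases i <;> fin_cases j <;>
    simp [sbr, evM, odM, σ3, Matrix.mul_apply, Fin.sum_univ_three] <;> ring

lemma sbr_mem_S2 {m n : M3} (hm : m ∈ S2) (hn : n ∈ S2) : sbr m n ∈ S2 := by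
  obtain ⟨a, b, c, d, rfl⟩ := mem_S2_iff.1 hm
  obtain ⟨a', b', c', d', rfl⟩ := mem_S2_iff.1 hn
  refine mem_S2_iff.2 ⟨2 * d * d', a' * b - a * b' + c * d' + c' * d,
    a' * c - a * c' + b * d' - b' * d, 0, ?_⟩
  ext i j
  fin_cases i <;> fin_cases j <;>
    simp [sbr, evM, odM, σ3, Matrix.mul_apply, Fin.sum_univ_three] <;> ring

lemma fmap_mem_S2 (m : M3) : fmap m ∈ S2 :=
  Submodule.mem_span_quadruple.2 ⟨_, _, _, _, rfl⟩

lemma fmap_eq_self_of_mem_S2 {m : M3} (hm : m ∈ S2) : fmap m = m := by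
  obtain ⟨a, b, c, d, rfl⟩ := mem_S2_iff.1 hm
  ext i j
  fin_cases i <;> fin_cases j <;> simp [fmap, B3, Eu]

lemma fmap_eq_zero_of_mem_S1 {m : M3} (hm : m ∈ S1) : fmap m = 0 := by
  obtain ⟨a, b, c, d, rfl⟩ := mem_S1_iff.1 hm
  ext i j
  fin_cases i <;> fin_cases j <;> simp [fmap, B3, Eu]

lemma fmap_sub_self_mem_S1 {m : M3} (hm : str m = 0) : fmap m - m ∈ S1 := by
  have h22 : m 2 2 = m 0 0 + m 1 1 := by rw [str] at hm; linarith
  refine mem_S1_iff.2 ⟨-m 0 0, -m 1 0, m 2 1 - m 1 2, -m 2 0, ?_⟩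
  ext i j
  fin_cases i <;> fin_cases j <;> simp [fmap, B3, Eu, h22]

/-- f satisfies (f-1)[f(x),f(y)] = f([(f-1)(x),(f-1)(y)]) on sl(2,1) -/
theorem stmt0 : ∀ x y : M3, str x = 0 → str y = 0 →
    fmap (sbr (fmap x) (fmap y)) - sbr (fmap x) (fmap y)
      = fmap (sbr (fmap x - x) (fmap y - y)) := by
  intro x y hx hy
  rw [fmap_eq_self_of_mem_S2 (sbr_mem_S2 (fmap_mem_S2 x) (fmap_mem_S2 y)), sub_self,
    fmap_eq_zero_of_mem_S1 (sbr_mem_S1 (fmap_sub_self_mem_S1 hx) (fmap_sub_self_mem_S1 hy))]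
end

section
/- The linear map sending E22+E33 ↦ h, E12 ↦ x, E13 ↦ y1, E23+E32 ↦ y2 is an isomorphism of Lie superalgebras from S2 ⊂ sl(2,1) onto the Lie superalgebra s with nonzero brackets [h,x]=-x, [h,y1]=-y1, [x,y2]=y1, [y1,y2]=x, [y2,y2]=2h. -/
/-!
`ψ10 u` is the matrix `!![0, u 1, u 2; 0, u 0, u 3; 0, u 3, u 0]`, so the bracket relation is an
entrywise polynomial identity, and the entries at `(1,1), (0,1), (0,2), (1,2)` recover `u`.
Since `ψ10 u` is the linear combination of the spanning family of `S2` with coefficients `u`,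
its image is exactly `S2`.
-/

lemma brS_eq (u v : V4) : brS u v =
    ![2 * (u 3 * v 3), -(u 0 * v 1) + u 1 * v 0 + u 2 * v 3 + u 3 * v 2,
      -(u 0 * v 2) + u 1 * v 3 + u 2 * v 0 - u 3 * v 1, 0] := by
  funext k
  fin_cases k <;> simp [brS, Fin.sum_univ_four, cS, eV] <;> ring

lemma ψ10_eq (u : V4) : ψ10 u = !![0, u 1, u 2; 0, u 0, u 3; 0, u 3, u 0] := by
  ext i j
  fin_cases i <;> fin_cases j <;> simp [ψ10, B3, Eu, Matrix.single]

lemma evM_of (a b c d e f g h i : ℚ) :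
    evM !![a, b, c; d, e, f; g, h, i] = !![a, b, 0; d, e, 0; 0, 0, i] := by
  ext x y
  fin_cases x <;> fin_cases y <;> simp [evM, σ3]

lemma odM_of (a b c d e f g h i : ℚ) :
    odM !![a, b, c; d, e, f; g, h, i] = !![0, 0, c; 0, 0, f; g, h, 0] := by
  ext x y
  fin_cases x <;> fin_cases y <;> simp [odM, σ3]

theorem ψ10_brS (u v : V4) : ψ10 (brS u v) = sbr (ψ10 u) (ψ10 v) := by
  simp only [sbr, ψ10_eq, brS_eq, evM_of, odM_of, Matrix.mul_fin_three]
  ext x y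
  fin_cases x <;> fin_cases y <;> simp <;> ring

def coordS2 (m : M3) : V4 := ![m 1 1, m 0 1, m 0 2, m 1 2]

theorem leftInverse_coordS2_ψ10 : Function.LeftInverse coordS2 ψ10 := by
  intro u
  funext k
  fin_cases k <;> simp [coordS2, ψ10_eq]

def basisS2 : Fin 4 → M3 := ![B3, Eu 0 1, Eu 0 2, Eu 1 2 + Eu 2 1]

lemma S2_eq_span_range_basisS2 : S2 = Submodule.span ℚ (Set.range basisS2) := by
  rw [S2, basisS2]
  congr 1
  ext
  simp only [Set.mem_insert_iff, Set.mem_singleton_iff, Matrix.range_cons, Matrix.range_empty,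
    Set.union_empty, Set.singleton_union]

lemma ψ10_eq_sum (u : V4) : ψ10 u = ∑ i, u i • basisS2 i := by
  simp [ψ10, basisS2, Fin.sum_univ_four]

theorem mem_S2_iff_exists_ψ10_eq (m : M3) : m ∈ S2 ↔ ∃ u : V4, ψ10 u = m := by
  simp only [S2_eq_span_range_basisS2, Submodule.mem_span_range_iff_exists_fun, ψ10_eq_sum]

/-- the map S2 → s, E22+E33 ↦ h, E12 ↦ x, E13 ↦ y1, E23+E32 ↦ y2
    is an isomorphism of Lie superalgebras (stated via its inverse ψ10 : s → S2) -/
theorem stmt10 : (∀ u v : V4, ψ10 (brS u v) = sbr (ψ10 u) (ψ10 v)) ∧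
    Function.Injective ψ10 ∧ (∀ u : V4, ψ10 u ∈ S2) ∧ (∀ m ∈ S2, ∃ u : V4, ψ10 u = m) :=
  ⟨ψ10_brS, leftInverse_coordS2_ψ10.injective,
    fun u => (mem_S2_iff_exists_ψ10_eq _).2 ⟨u, rfl⟩, fun m => (mem_S2_iff_exists_ψ10_eq m).1⟩
end

section
/- The map δ_1 on s satisfies the super coJacobi identity: Alt_s(δ_1 ⊗ Id)(δ_1(z)) = 0 for all z in s, where Alt_s(a⊗b⊗c) = a⊗b⊗c + (-1)^{|a|(|b|+|c|)} b⊗c⊗a + (-1)^{|c|(|a|+|b|)} c⊗a⊗b. -/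
/-! The map `z ↦ Alt_s ((δ_1 ⊗ Id) (δ_1 z))` is linear, so it suffices that it vanishes on the
basis `h, x, y1, y2`; there every entry is an explicit rational number, evaluated by the kernel. -/

def δ1Lin : V4 →ₗ[ℚ] TV where
  toFun := δ1
  map_add' u v := by
    funext i j
    simp only [δ1, Pi.add_apply, Pi.smul_apply, Pi.neg_apply, Pi.sub_apply, smul_eq_mul]
    ring
  map_smul' c u := by
    funext i j
    simp only [δ1, Pi.add_apply, Pi.smul_apply, Pi.neg_apply, Pi.sub_apply, smul_eq_mul,
      RingHom.id_apply]
    ring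

def d1IdLin : TV →ₗ[ℚ] T3V where
  toFun := d1Id
  map_add' s t := by
    funext i j k
    simp only [d1Id, Pi.add_apply, mul_add, Finset.sum_add_distrib]
  map_smul' c t := by
    funext i j k
    simp only [d1Id, Pi.smul_apply, smul_eq_mul, RingHom.id_apply, Finset.mul_sum]
    exact Finset.sum_congr rfl fun a _ => by ring

def AltSLin : T3V →ₗ[ℚ] T3V where
  toFun := AltS
  map_add' s t := by
    funext i j k
    simp only [AltS, Pi.add_apply]
    ring
  map_smul' c t := by
    funext i j k
    simp only [AltS, Pi.smul_apply, smul_eq_mul, RingHom.id_apply]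
    ring

lemma eV_eq_single (i : Fin 4) : eV i = Pi.single i 1 := by
  funext j
  simp [eV, Pi.single_apply]

lemma AltS_d1Id_δ1_eV (a : Fin 4) : AltS (d1Id (δ1 (eV a))) = 0 := by
  have entries : ∀ a i j k : Fin 4, AltS (d1Id (δ1 (eV a))) i j k = 0 := by decide +kernel
  funext i j k
  exact entries a i j k

/-- δ_1 satisfies the super coJacobi identity -/
theorem stmt16 : ∀ z : V4, AltS (d1Id (δ1 z)) = 0 := by
  have coJacobiator_eq_zero : AltSLin ∘ₗ d1IdLin ∘ₗ δ1Lin = 0 :=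
    (Pi.basisFun ℚ (Fin 4)).ext fun a => by
      simpa [← eV_eq_single, AltSLin, d1IdLin, δ1Lin] using AltS_d1Id_δ1_eV a
  exact fun z => LinearMap.congr_fun coJacobiator_eq_zero z
end

section
/- The subspaces T1 = span{E11+E33, E21, E23, E31} and T2 = span{E22+E33, E12, E13, E32} are Lie subsuperalgebras of sl(2,1), each isomorphic to the 4-dimensional solvable Lie superalgebra t with even basis h, x, odd basis y1, y2 and nonzero brackets [h,x]=-x, [h,y1]=-y1, [y1,y2]=x, and sl(2,1) = T1 ⊕ T2 as graded vector spaces. -/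
/-! Both spans are images of explicit linear maps `V4 → M3`: `ψ18` for `T2` and
`h, x, y1, y2 ↦ E11+E33, E21, E23, E31` for `T1`. A direct matrix computation shows that
these maps turn the bracket of t into the super commutator, so `T1` and `T2` are closed under
it and are copies of t. Apart from the (3,3) entry, the two images occupy complementary
matrix positions, and the (3,3) entry is fixed by the supertrace; hence sl(2,1) = T1 ⊕ T2. -/

theorem Submodule.mem_span_four_iff {R M : Type*} [Semiring R] [AddCommMonoid M] [Module R M]
    {a b c d m : M} :
    m ∈ Submodule.span R {a, b, c, d} ↔
      ∃ u : Fin 4 → R, u 0 • a + u 1 • b + u 2 • c + u 3 • d = m := by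
  have hrange : Set.range ![a, b, c, d] = {a, b, c, d} := by
    simp only [Matrix.range_cons, Matrix.range_empty, Set.union_empty, Set.singleton_union]
  rw [← hrange, Submodule.mem_span_range_iff_exists_fun]
  simp only [Fin.sum_univ_four, Matrix.cons_val]

def tToT1 : V4 →ₗ[ℚ] M3 := Fintype.linearCombination ℚ ![A3, Eu 1 0, Eu 1 2, Eu 2 0]

theorem tToT1_apply (u : V4) :
    tToT1 u = u 0 • A3 + u 1 • Eu 1 0 + u 2 • Eu 1 2 + u 3 • Eu 2 0 := by
  simp only [tToT1, Fintype.linearCombination_apply, Fin.sum_univ_four, Matrix.cons_val]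

theorem tToT1_eq_matrix (u : V4) : tToT1 u = !![u 0, 0, 0; u 1, 0, u 2; u 3, 0, u 0] := by
  ext i j
  fin_cases i <;> fin_cases j <;> simp [tToT1_apply, A3, Eu]

theorem ψ18_eq_matrix (u : V4) : ψ18 u = !![0, u 1, u 2; 0, u 0, 0; 0, u 3, u 0] := by
  ext i j
  fin_cases i <;> fin_cases j <;> simp [ψ18, B3, Eu]

theorem mem_T1_iff {m : M3} : m ∈ T1 ↔ ∃ u : V4, tToT1 u = m := by
  simp only [T1, Submodule.mem_span_four_iff, tToT1_apply]

theorem mem_T2_iff {m : M3} : m ∈ T2 ↔ ∃ u : V4, ψ18 u = m := by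
  simp only [T2, Submodule.mem_span_four_iff, ψ18]

theorem brT_eq (u v : V4) :
    brT u v = ![0, u 1 * v 0 - u 0 * v 1 + u 2 * v 3 + u 3 * v 2, u 2 * v 0 - u 0 * v 2, 0] := by
  ext k
  fin_cases k <;> simp [brT, cT, eV, Fin.sum_univ_four] <;> ring

theorem tToT1_brT (u v : V4) : tToT1 (brT u v) = sbr (tToT1 u) (tToT1 v) := by
  ext i j
  fin_cases i <;> fin_cases j <;>
    simp [tToT1_eq_matrix, brT_eq, sbr, evM, odM, σ3, Matrix.mul_apply, Fin.sum_univ_three] <;>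
    ring

theorem ψ18_brT (u v : V4) : ψ18 (brT u v) = sbr (ψ18 u) (ψ18 v) := by
  ext i j
  fin_cases i <;> fin_cases j <;>
    simp [ψ18_eq_matrix, brT_eq, sbr, evM, odM, σ3, Matrix.mul_apply, Fin.sum_univ_three] <;> ring

theorem tToT1_injective : Function.Injective tToT1 := by
  refine Function.LeftInverse.injective (g := fun m => ![m 0 0, m 1 0, m 1 2, m 2 0]) fun u => ?_
  ext k
  fin_cases k <;> simp [tToT1_eq_matrix]

theorem ψ18_injective : Function.Injective ψ18 := by
  refine Function.LeftInverse.injective (g := fun m => ![m 1 1, m 0 1, m 0 2, m 2 1]) fun u => ?_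
  ext k
  fin_cases k <;> simp [ψ18_eq_matrix]

theorem sbr_mem_of_brT_hom {ψ : V4 → M3} {S : Set M3}
    (hψ : ∀ u v, ψ (brT u v) = sbr (ψ u) (ψ v)) (hS : ∀ m, m ∈ S ↔ ∃ u, ψ u = m) :
    ∀ x ∈ S, ∀ y ∈ S, sbr x y ∈ S := by
  intro x hx y hy
  obtain ⟨u, rfl⟩ := (hS x).1 hx
  obtain ⟨v, rfl⟩ := (hS _).1 hy
  exact (hS _).2 ⟨brT u v, hψ u v⟩

theorem T1_inf_T2_eq_bot : T1 ⊓ T2 = ⊥ := by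
  refine (Submodule.eq_bot_iff _).2 fun m hm => ?_
  obtain ⟨⟨u, rfl⟩, ⟨v, hv⟩⟩ := And.imp mem_T1_iff.1 mem_T2_iff.1 hm
  have entry (i j : Fin 3) : tToT1 u i j = ψ18 v i j := congrFun (congrFun hv.symm i) j
  have hu : u = 0 := by
    ext k
    fin_cases k
    · simpa [tToT1_eq_matrix, ψ18_eq_matrix] using entry 0 0
    · simpa [tToT1_eq_matrix, ψ18_eq_matrix] using entry 1 0
    · simpa [tToT1_eq_matrix, ψ18_eq_matrix] using entry 1 2
    · simpa [tToT1_eq_matrix, ψ18_eq_matrix] using entry 2 0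
  rw [hu, map_zero]

theorem T1_sup_T2_eq_sl21 : T1 ⊔ T2 = sl21 := by
  apply le_antisymm
  · refine sup_le (fun m hm => ?_) (fun m hm => ?_)
    · obtain ⟨u, rfl⟩ := mem_T1_iff.1 hm
      simp [sl21, str, tToT1_eq_matrix]
    · obtain ⟨u, rfl⟩ := mem_T2_iff.1 hm
      simp [sl21, str, ψ18_eq_matrix]
  · intro m (hm : str m = 0)
    refine Submodule.mem_sup.2 ⟨tToT1 ![m 0 0, m 1 0, m 1 2, m 2 0], mem_T1_iff.2 ⟨_, rfl⟩,
      ψ18 ![m 1 1, m 0 1, m 0 2, m 2 1], mem_T2_iff.2 ⟨_, rfl⟩, ?_⟩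
    rw [str] at hm
    ext i j
    fin_cases i <;> fin_cases j <;> simp [tToT1_eq_matrix, ψ18_eq_matrix]
    linarith

/-- T1 and T2 are subsuperalgebras of sl(2,1), each isomorphic to the
    solvable Lie superalgebra t (the explicit isomorphism for T2 being
    E22+E33 ↦ h, E12 ↦ x, E13 ↦ y1, E32 ↦ y2), and sl(2,1) = T1 ⊕ T2 -/
theorem stmt18 :
    (∀ x ∈ T1, ∀ y ∈ T1, sbr x y ∈ T1) ∧
    (∀ x ∈ T2, ∀ y ∈ T2, sbr x y ∈ T2) ∧
    (∀ u v : V4, ψ18 (brT u v) = sbr (ψ18 u) (ψ18 v)) ∧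
    Function.Injective ψ18 ∧
    (∀ u : V4, ψ18 u ∈ T2) ∧ (∀ m ∈ T2, ∃ u : V4, ψ18 u = m) ∧
    (∃ ψ : V4 → M3, (∀ (c : ℚ) (u : V4), ψ (c • u) = c • ψ u) ∧
      (∀ u v : V4, ψ (u + v) = ψ u + ψ v) ∧
      (∀ u v : V4, ψ (brT u v) = sbr (ψ u) (ψ v)) ∧
      Function.Injective ψ ∧
      (∀ u : V4, ψ u ∈ T1) ∧ (∀ m ∈ T1, ∃ u : V4, ψ u = m)) ∧
    T1 ⊓ T2 = ⊥ ∧ T1 ⊔ T2 = sl21 :=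
  ⟨sbr_mem_of_brT_hom (S := T1) tToT1_brT fun _ => mem_T1_iff,
    sbr_mem_of_brT_hom (S := T2) ψ18_brT fun _ => mem_T2_iff,
    ψ18_brT, ψ18_injective, fun u => mem_T2_iff.2 ⟨u, rfl⟩, fun _ => mem_T2_iff.1,
    ⟨tToT1, tToT1.map_smul, tToT1.map_add, tToT1_brT, tToT1_injective,
      fun u => mem_T1_iff.2 ⟨u, rfl⟩, fun _ => mem_T1_iff.1⟩,
    T1_inf_T2_eq_bot, T1_sup_T2_eq_sl21⟩
end

section
/- The standard cocommutator δ_s(g) = [g⊗1+1⊗g, r_s] on sl(2,1), with r_s = (-E22-E33)⊗(E11+E33) + E12⊗E21 - E13⊗E31 + E32⊗E23, satisfies: δ_s(E11+E33)=0, δ_s(E22+E33)=0, δ_s(E21)=E21∧(E11+E33) - E23∧E31, δ_s(E12)=E12∧(-E22-E33)+E13∧E32, δ_s(E23)=0, δ_s(E13)=0, δ_s(E31)=E31∧(E11+E33), δ_s(E32)=E32∧(-E22-E33); moreover r_s + T_s(r_s) = Ω. -/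
/-! Each identity is a finite entrywise computation on explicit arrays of rationals, checked by
the kernel: `Rat.add` and `Rat.mul` are irreducible, so elaboration-time `decide` gets stuck. -/

theorem δs_A3 : δs A3 = 0 := by decide +kernel

theorem δs_B3 : δs B3 = 0 := by decide +kernel

theorem δs_Eu10 : δs (Eu 1 0) = wdg (Eu 1 0) A3 - wdg (Eu 1 2) (Eu 2 0) := by decide +kernel

theorem δs_Eu01 : δs (Eu 0 1) = wdg (Eu 0 1) (-B3) + wdg (Eu 0 2) (Eu 2 1) := by decide +kernel

theorem δs_Eu12 : δs (Eu 1 2) = 0 := by decide +kernel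

theorem δs_Eu02 : δs (Eu 0 2) = 0 := by decide +kernel

theorem δs_Eu20 : δs (Eu 2 0) = wdg (Eu 2 0) A3 := by decide +kernel

theorem δs_Eu21 : δs (Eu 2 1) = wdg (Eu 2 1) (-B3) := by decide +kernel

theorem rs_add_TsM_rs : rs + TsM rs = Omega := by decide +kernel

/-- the values of the standard cocommutator δ_s, and r_s + T_s(r_s) = Ω -/
theorem stmt19 :
    δs A3 = 0 ∧
    δs B3 = 0 ∧
    δs (Eu 1 0) = wdg (Eu 1 0) A3 - wdg (Eu 1 2) (Eu 2 0) ∧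
    δs (Eu 0 1) = wdg (Eu 0 1) (-B3) + wdg (Eu 0 2) (Eu 2 1) ∧
    δs (Eu 1 2) = 0 ∧
    δs (Eu 0 2) = 0 ∧
    δs (Eu 2 0) = wdg (Eu 2 0) A3 ∧
    δs (Eu 2 1) = wdg (Eu 2 1) (-B3) ∧
    rs + TsM rs = Omega :=
  ⟨δs_A3, δs_B3, δs_Eu10, δs_Eu01, δs_Eu12, δs_Eu02, δs_Eu20, δs_Eu21, rs_add_TsM_rs⟩
end
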